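/- Let R be an algebraic curvature tensor on ℝ³. The product tensor of R with the flat factor ℝ² (an algebraic curvature tensor on ℝ⁵) has nonnegative isotropic curvature if and only if R has nonnegative sectional curvature, i.e. R(X,Y,X,Y) ≥ 0 for all X, Y. -/

import Mathlib

noncomputable section
open scoped BigOperators

def dotp {n : ℕ} (X Y : Fin n → ℝ) : ℝ := ∑ i, X i * Y i

def ON4 {n : ℕ} (e₁ e₂ e₃ e₄ : Fin n → ℝ) : Prop :=
  dotp e₁ e₁ = 1 ∧ dotp e₂ e₂ = 1 ∧ dotp e₃ e₃ = 1 ∧ dotp e₄ e₄ = 1 ∧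
  dotp e₁ e₂ = 0 ∧ dotp e₁ e₃ = 0 ∧ dotp e₁ e₄ = 0 ∧
  dotp e₂ e₃ = 0 ∧ dotp e₂ e₄ = 0 ∧ dotp e₃ e₄ = 0

/-!
In dimension three every 2-vector is decomposable, `Λ²ℝ³ ≅ ℝ³` through the cross product, and
`R(X, Y, Z, W) = ⟨X × Y, 𝓡 (Z × W)⟩` for the curvature operator `𝓡`. So nonnegative sectional
curvature is the same as `𝓡 ≥ 0`. By the Bianchi identity the isotropic curvature of a four-frame
is `⟨𝓡 p, p⟩ + ⟨𝓡 q, q⟩` with `p = e₁ × e₃ - e₂ × e₄` and `q = e₁ × e₄ + e₂ × e₃` (projected to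
`ℝ³`), hence nonnegative when `𝓡 ≥ 0`. Conversely, on the frame `(e, ∂₁, f, ∂₂)` with `e, f`
orthonormal in `ℝ³` and `∂₁, ∂₂` spanning the flat factor, the isotropic curvature is the
sectional curvature `R(e, f, e, f)`.
-/

open Matrix

section CrossProduct

variable {K : Type*} [CommRing K]

theorem LinearMap.IsAlt.apply_eq_sum_cross {M : Type*} [AddCommGroup M] [Module K M]
    {B : (Fin 3 → K) →ₗ[K] (Fin 3 → K) →ₗ[K] M} (hB : B.IsAlt) (x y : Fin 3 → K) :
    B x y = ∑ i, (x ⨯₃ y) i • B (Pi.single (i + 1) 1) (Pi.single (i + 2) 1) := by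
  have expand (v : Fin 3 → K) : v = ∑ i, v i • Pi.single i 1 := by
    simp [← Pi.single_smul', Finset.univ_sum_single]
  conv_lhs => rw [expand x, expand y]
  simp only [map_sum, map_smul, LinearMap.sum_apply, LinearMap.smul_apply]
  simp only [Fin.sum_univ_three, hB.self_eq_zero, ← hB.neg (Pi.single 0 1) (Pi.single 1 1),
    ← hB.neg (Pi.single 1 1) (Pi.single 2 1), ← hB.neg (Pi.single 2 1) (Pi.single 0 1),
    cross_apply]
  simp only [Fin.isValue, Fin.reduceAdd, cons_val, cons_val_zero, cons_val_one, smul_zero,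
    smul_neg, smul_add, zero_add, add_zero]
  module

theorem exists_cross_eq {F : Type*} [Field F] (w : Fin 3 → F) : ∃ x y, x ⨯₃ y = w := by
  by_cases h : w 0 = 0
  · refine ⟨![1, 0, 0], ![0, w 2, -w 1], ?_⟩
    ext i; fin_cases i <;> simp [cross_apply, h]
  · refine ⟨![-w 1 / w 0, 1, 0], ![-w 2, 0, w 0], ?_⟩
    ext i; fin_cases i <;> simp [cross_apply, h]

theorem dotProduct_self_pos {n : Type*} [Fintype n] {v : n → ℝ} (hv : v ≠ 0) : 0 < v ⬝ᵥ v := by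
  simpa using dotProduct_star_self_pos_iff.mpr hv

theorem exists_orthonormal_cross_eq_smul {x y : Fin 3 → ℝ} (h : x ⨯₃ y ≠ 0) :
    ∃ (e f : Fin 3 → ℝ) (c : ℝ), e ⬝ᵥ e = 1 ∧ f ⬝ᵥ f = 1 ∧ e ⬝ᵥ f = 0 ∧
      x ⨯₃ y = c • e ⨯₃ f := by
  set g := (x ⬝ᵥ x) • y - (x ⬝ᵥ y) • x
  have hxg : x ⨯₃ g = (x ⬝ᵥ x) • x ⨯₃ y := by simp [g, cross_self]
  have hx : 0 < x ⬝ᵥ x := dotProduct_self_pos (by rintro rfl; simp at h)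
  have hg : 0 < g ⬝ᵥ g := dotProduct_self_pos fun hg0 =>
    h <| (smul_eq_zero.mp (by rw [← hxg, hg0, map_zero])).resolve_left hx.ne'
  have hxg_dot : x ⬝ᵥ g = 0 := by
    simp only [g, dotProduct_sub, dotProduct_smul, smul_eq_mul]; ring
  have normalize {v : Fin 3 → ℝ} (hv : 0 < v ⬝ᵥ v) :
      ((√(v ⬝ᵥ v))⁻¹ • v) ⬝ᵥ ((√(v ⬝ᵥ v))⁻¹ • v) = 1 := by
    simp only [smul_dotProduct, dotProduct_smul, smul_eq_mul]
    field_simp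
    exact (Real.sq_sqrt hv.le).symm
  refine ⟨(√(x ⬝ᵥ x))⁻¹ • x, (√(g ⬝ᵥ g))⁻¹ • g, √(x ⬝ᵥ x) * √(g ⬝ᵥ g) / x ⬝ᵥ x,
    normalize hx, normalize hg, by simp [smul_dotProduct, dotProduct_smul, hxg_dot], ?_⟩
  simp only [map_smul, LinearMap.smul_apply, hxg, smul_smul]
  field_simp
  simp

end CrossProduct

namespace MultilinearMap

variable {K V : Type*} [CommRing K] [AddCommGroup V] [Module K V]

def leadingPair (R : MultilinearMap K (fun _ : Fin 4 => V) K) (Z W : V) :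
    V →ₗ[K] V →ₗ[K] K :=
  LinearMap.mk₂ K (fun X Y => R ![X, Y, Z, W])
    (fun X X' Y => R.cons_add ![Y, Z, W] X X')
    (fun c X Y => R.cons_smul ![Y, Z, W] c X)
    (fun X Y Y' => (R.curryLeft X).cons_add ![Z, W] Y Y')
    (fun c X Y => (R.curryLeft X).cons_smul ![Z, W] c Y)

theorem leadingPair_apply (R : MultilinearMap K (fun _ : Fin 4 => V) K) (X Y Z W : V) :
    R.leadingPair Z W X Y = R ![X, Y, Z, W] := rfl

theorem compLinearMap_apply_vec4 {W M : Type*} [AddCommGroup W] [Module K W] [AddCommGroup M]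
    [Module K M] (R : MultilinearMap K (fun _ : Fin 4 => W) M) (g : V →ₗ[K] W) (a b c d : V) :
    (R.compLinearMap fun _ => g) ![a, b, c, d] = R ![g a, g b, g c, g d] := by
  rw [compLinearMap_apply]
  congr 1
  ext i : 1
  fin_cases i <;> rfl

end MultilinearMap

section CurvatureOperator

variable (R : MultilinearMap ℝ (fun _ : Fin 4 => Fin 3 → ℝ) ℝ)

/-- The curvature operator on `Λ²ℝ³` in the basis `e_{i+1} ∧ e_{i+2}`, which the cross product
sends to `e_i`. -/
def curvatureMatrix : Matrix (Fin 3) (Fin 3) ℝ :=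
  Matrix.of fun i j =>
    R ![Pi.single (i + 1) 1, Pi.single (i + 2) 1, Pi.single (j + 1) 1, Pi.single (j + 2) 1]

variable {R}

theorem apply_eq_cross_dotProduct_mulVec_cross
    (hanti : ∀ X Y Z W, R ![X, Y, Z, W] = - R ![Y, X, Z, W])
    (hpair : ∀ X Y Z W, R ![X, Y, Z, W] = R ![Z, W, X, Y]) (X Y Z W : Fin 3 → ℝ) :
    R ![X, Y, Z, W] = (X ⨯₃ Y) ⬝ᵥ curvatureMatrix R *ᵥ (Z ⨯₃ W) := by
  have expand_leading (X Y Z W : Fin 3 → ℝ) : R ![X, Y, Z, W] =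
      ∑ i, (X ⨯₃ Y) i * R ![Pi.single (i + 1) 1, Pi.single (i + 2) 1, Z, W] := by
    refine LinearMap.IsAlt.apply_eq_sum_cross (B := R.leadingPair Z W) (fun X => ?_) X Y
    have := hanti X X Z W
    rw [MultilinearMap.leadingPair_apply]
    linarith
  calc R ![X, Y, Z, W] = R ![Z, W, X, Y] := hpair _ _ _ _
    _ = ∑ j, (Z ⨯₃ W) j * ∑ i, (X ⨯₃ Y) i * curvatureMatrix R i j := by
      rw [expand_leading]
      congr! 2 with j
      rw [hpair, expand_leading]
      rfl
    _ = _ := by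
      simp only [dotProduct, mulVec, Finset.mul_sum]
      rw [Finset.sum_comm]
      exact Finset.sum_congr rfl fun i _ => Finset.sum_congr rfl fun j _ => by ring

theorem curvatureMatrix_isHermitian (hpair : ∀ X Y Z W, R ![X, Y, Z, W] = R ![Z, W, X, Y]) :
    (curvatureMatrix R).IsHermitian :=
  IsHermitian.ext fun i j => by simp [curvatureMatrix, hpair _ _ (Pi.single (i + 1) 1)]

theorem curvatureMatrix_posSemidef (hanti : ∀ X Y Z W, R ![X, Y, Z, W] = - R ![Y, X, Z, W])
    (hpair : ∀ X Y Z W, R ![X, Y, Z, W] = R ![Z, W, X, Y])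
    (hsec : ∀ X Y : Fin 3 → ℝ, 0 ≤ R ![X, Y, X, Y]) : (curvatureMatrix R).PosSemidef := by
  refine .of_dotProduct_mulVec_nonneg (curvatureMatrix_isHermitian hpair) fun w => ?_
  obtain ⟨X, Y, rfl⟩ := exists_cross_eq w
  simpa [← apply_eq_cross_dotProduct_mulVec_cross hanti hpair] using hsec X Y

theorem sectional_nonneg_of_orthonormal (hanti : ∀ X Y Z W, R ![X, Y, Z, W] = - R ![Y, X, Z, W])
    (hpair : ∀ X Y Z W, R ![X, Y, Z, W] = R ![Z, W, X, Y])
    (h : ∀ e f : Fin 3 → ℝ, e ⬝ᵥ e = 1 → f ⬝ᵥ f = 1 → e ⬝ᵥ f = 0 → 0 ≤ R ![e, f, e, f])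
    (X Y : Fin 3 → ℝ) : 0 ≤ R ![X, Y, X, Y] := by
  rw [apply_eq_cross_dotProduct_mulVec_cross hanti hpair]
  by_cases hXY : X ⨯₃ Y = 0
  · simp [hXY]
  obtain ⟨e, f, c, he, hf, hef, hc⟩ := exists_orthonormal_cross_eq_smul hXY
  have hef_nonneg := h e f he hf hef
  rw [apply_eq_cross_dotProduct_mulVec_cross hanti hpair] at hef_nonneg
  rw [hc, mulVec_smul, smul_dotProduct, dotProduct_smul, smul_smul, smul_eq_mul]
  exact mul_nonneg (mul_self_nonneg c) hef_nonneg

theorem isotropic_eq (hanti : ∀ X Y Z W, R ![X, Y, Z, W] = - R ![Y, X, Z, W])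
    (hpair : ∀ X Y Z W, R ![X, Y, Z, W] = R ![Z, W, X, Y])
    (hbianchi : ∀ X Y Z W, R ![X, Y, Z, W] + R ![Y, Z, X, W] + R ![Z, X, Y, W] = 0)
    (x₁ x₂ x₃ x₄ : Fin 3 → ℝ) :
    R ![x₁, x₃, x₁, x₃] + R ![x₁, x₄, x₁, x₄] + R ![x₂, x₃, x₂, x₃] + R ![x₂, x₄, x₂, x₄]
        - 2 * R ![x₁, x₂, x₃, x₄] =
      (x₁ ⨯₃ x₃ - x₂ ⨯₃ x₄) ⬝ᵥ curvatureMatrix R *ᵥ (x₁ ⨯₃ x₃ - x₂ ⨯₃ x₄)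
        + (x₁ ⨯₃ x₄ + x₂ ⨯₃ x₃) ⬝ᵥ curvatureMatrix R *ᵥ (x₁ ⨯₃ x₄ + x₂ ⨯₃ x₃) := by
  simp only [mulVec_sub, mulVec_add, dotProduct_sub, sub_dotProduct, dotProduct_add,
    add_dotProduct, ← apply_eq_cross_dotProduct_mulVec_cross hanti hpair]
  have := hbianchi x₁ x₂ x₃ x₄
  linarith [hpair x₂ x₃ x₁ x₄, hpair x₂ x₄ x₁ x₃, hanti x₃ x₁ x₂ x₄]

theorem isotropic_nonneg_of_sectional_nonneg
    (hanti : ∀ X Y Z W, R ![X, Y, Z, W] = - R ![Y, X, Z, W])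
    (hpair : ∀ X Y Z W, R ![X, Y, Z, W] = R ![Z, W, X, Y])
    (hbianchi : ∀ X Y Z W, R ![X, Y, Z, W] + R ![Y, Z, X, W] + R ![Z, X, Y, W] = 0)
    (hsec : ∀ X Y : Fin 3 → ℝ, 0 ≤ R ![X, Y, X, Y]) (x₁ x₂ x₃ x₄ : Fin 3 → ℝ) :
    0 ≤ R ![x₁, x₃, x₁, x₃] + R ![x₁, x₄, x₁, x₄] + R ![x₂, x₃, x₂, x₃] + R ![x₂, x₄, x₂, x₄]
        - 2 * R ![x₁, x₂, x₃, x₄] := by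
  have hM := curvatureMatrix_posSemidef hanti hpair hsec
  rw [isotropic_eq hanti hpair hbianchi]
  exact add_nonneg (by simpa only [star_trivial] using hM.dotProduct_mulVec_nonneg _)
    (by simpa only [star_trivial] using hM.dotProduct_mulVec_nonneg _)

end CurvatureOperator

section Product

theorem dotp_append {m n : ℕ} (x x' : Fin m → ℝ) (y y' : Fin n → ℝ) :
    dotp (Fin.append x y) (Fin.append x' y') = x ⬝ᵥ x' + y ⬝ᵥ y' := by
  simp [dotp, dotProduct, Fin.sum_univ_add]

theorem funLeft_castLE_append {m n : ℕ} (h : m ≤ m + n) (x : Fin m → ℝ) (y : Fin n → ℝ) :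
    LinearMap.funLeft ℝ ℝ (Fin.castLE h) (Fin.append x y) = x :=
  funext (Fin.append_left x y)

theorem on4_append {e f : Fin 3 → ℝ} (he : e ⬝ᵥ e = 1) (hf : f ⬝ᵥ f = 1) (hef : e ⬝ᵥ f = 0) :
    ON4 (Fin.append e (0 : Fin 2 → ℝ)) (Fin.append 0 (Pi.single 0 1))
      (Fin.append f 0) (Fin.append 0 (Pi.single 1 1)) := by
  simp [ON4, dotp_append, he, hf, hef]

end Product

theorem product_with_plane_nic_iff_sectional_nonneg
    (R : MultilinearMap ℝ (fun _ : Fin 4 => (Fin 3 → ℝ)) ℝ)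
    (hanti : ∀ X Y Z W, R ![X, Y, Z, W] = - R ![Y, X, Z, W])
    (hpair : ∀ X Y Z W, R ![X, Y, Z, W] = R ![Z, W, X, Y])
    (hbianchi : ∀ X Y Z W,
      R ![X, Y, Z, W] + R ![Y, Z, X, W] + R ![Z, X, Y, W] = 0)
    -- the product curvature tensor on ℝ⁵ = ℝ³ × ℝ², extending R by zero
    (R5 : MultilinearMap ℝ (fun _ : Fin 4 => (Fin 5 → ℝ)) ℝ)
    (hR5 : R5 = R.compLinearMap
      (fun _ => LinearMap.funLeft ℝ ℝ (Fin.castLE (by omega) : Fin 3 → Fin 5))) :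
    (∀ e₁ e₂ e₃ e₄ : Fin 5 → ℝ, ON4 e₁ e₂ e₃ e₄ →
      0 ≤ R5 ![e₁, e₃, e₁, e₃] + R5 ![e₁, e₄, e₁, e₄] + R5 ![e₂, e₃, e₂, e₃]
          + R5 ![e₂, e₄, e₂, e₄] - 2 * R5 ![e₁, e₂, e₃, e₄]) ↔
    (∀ X Y : Fin 3 → ℝ, 0 ≤ R ![X, Y, X, Y]) := by
  subst hR5
  simp only [MultilinearMap.compLinearMap_apply_vec4]
  constructor
  · intro hnic
    refine sectional_nonneg_of_orthonormal hanti hpair fun e f he hf hef => ?_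
    have h := hnic _ _ _ _ (on4_append he hf hef)
    simp only [funLeft_castLE_append (m := 3) (n := 2)] at h
    have hz₀ (Y Z W : Fin 3 → ℝ) : R ![0, Y, Z, W] = 0 := R.map_coord_zero 0 rfl
    have hz₁ (X Z W : Fin 3 → ℝ) : R ![X, 0, Z, W] = 0 := R.map_coord_zero 1 rfl
    simpa [hz₀, hz₁] using h
  · intro hsec e₁ e₂ e₃ e₄ _
    exact isotropic_nonneg_of_sectional_nonneg hanti hpair hbianchi hsec _ _ _ _
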